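/- For $\lambda \in (0,1)$, the function $F(x) = 2(2\sin(x/2))^{\lambda} + (2\sin(3x/2))^{\lambda}$ is concave on $[\pi/3, \pi/2)$, and consequently $F(x) \ge 2 + 2^{\lambda}$ for all $x \in [\pi/3, \pi/2)$, with equality only at $x = \pi/3$. -/

import Mathlib

/-! On `[π/3, π/2]` both `x/2` and `3x/2` stay in `[0, π]`, where `sin` is concave, and
`t ↦ t ^ λ` is concave and monotone on `[0, ∞)`, so `F` is concave there. A concave function on
an interval lies above the chord joining its endpoint values, and
`F (π/3) = 2 + 2 ^ λ < 3 (√2) ^ λ = F (π/2)`, which gives the bound and its strictness away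
from `π/3`. -/

open Real Set

theorem ConcaveOn.rpow {E : Type*} [AddCommGroup E] [Module ℝ E] {s : Set E} {f : E → ℝ}
    {p : ℝ} (hf : ConcaveOn ℝ s f) (hf₀ : ∀ x ∈ s, 0 ≤ f x) (hp₀ : 0 ≤ p) (hp₁ : p ≤ 1) :
    ConcaveOn ℝ s fun x => f x ^ p := by
  refine ⟨hf.1, fun x hx y hy a b ha hb hab => ?_⟩
  calc a • f x ^ p + b • f y ^ p ≤ (a • f x + b • f y) ^ p :=
        (concaveOn_rpow hp₀ hp₁).2 (hf₀ x hx) (hf₀ y hy) ha hb hab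
    _ ≤ f (a • x + b • y) ^ p := by
        refine rpow_le_rpow ?_ (hf.2 hx hy ha hb hab) hp₀
        have := hf₀ x hx
        have := hf₀ y hy
        simp only [smul_eq_mul]
        positivity

theorem concaveOn_sin_mul {s : Set ℝ} {c : ℝ} (hs : Convex ℝ s)
    (hsc : ∀ x ∈ s, c * x ∈ Icc 0 π) : ConcaveOn ℝ s fun x => sin (c * x) :=
  (strictConcaveOn_sin_Icc.concaveOn.comp_linearMap (LinearMap.mulLeft ℝ c)).subset hsc hs

theorem concaveOn_rpow_two_mul_sin_mul {s : Set ℝ} {c p : ℝ} (hs : Convex ℝ s)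
    (hsc : ∀ x ∈ s, c * x ∈ Icc 0 π) (hp₀ : 0 ≤ p) (hp₁ : p ≤ 1) :
    ConcaveOn ℝ s fun x => (2 * sin (c * x)) ^ p := by
  refine ((concaveOn_sin_mul hs hsc).smul zero_le_two).rpow (fun x hx => ?_) hp₀ hp₁
  have := sin_nonneg_of_nonneg_of_le_pi (hsc x hx).1 (hsc x hx).2
  simp only [smul_eq_mul]
  positivity

theorem ConcaveOn.left_lt_of_mem_Ioc {𝕜 : Type*} [Field 𝕜] [LinearOrder 𝕜]
    [IsStrictOrderedRing 𝕜] {f : 𝕜 → 𝕜} {a b x : 𝕜} (hf : ConcaveOn 𝕜 (Icc a b) f)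
    (hfab : f a < f b) (hx : x ∈ Ioc a b) : f a < f x := by
  rcases hx.2.eq_or_lt with rfl | hxb
  · exact hfab
  have hab : a ≤ b := hx.1.le.trans hxb.le
  by_contra! hfx
  refine hfx.not_gt (hf.left_lt_of_lt_right (left_mem_Icc.2 hab) (right_mem_Icc.2 hab) ?_ ?_)
  · rw [openSegment_eq_Ioo (hx.1.trans hxb)]
    exact ⟨hx.1, hxb⟩
  · exact hfx.trans_lt hfab

theorem two_add_two_rpow_lt_three_mul_sqrt_two_rpow {p : ℝ} (hp₀ : 0 < p) (hp₂ : p < 2) :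
    2 + (2 : ℝ) ^ p < 3 * √2 ^ p := by
  have hsqrt : √2 ^ p = 2 ^ (p / 2) := by
    rw [sqrt_eq_rpow, ← rpow_mul zero_le_two, one_div_mul_eq_div]
  have hsq : (2 : ℝ) ^ p = (2 ^ (p / 2)) ^ 2 := by
    rw [← rpow_natCast, ← rpow_mul zero_le_two]
    norm_num
  have h1 : 1 < (2 : ℝ) ^ (p / 2) := one_lt_rpow one_lt_two (by positivity)
  have h2 : (2 : ℝ) ^ (p / 2) < 2 := by
    simpa using rpow_lt_rpow_of_exponent_lt one_lt_two (show p / 2 < 1 by linarith)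
  -- with `t = 2 ^ (p/2)` the claim is `(t - 1) (t - 2) < 0`
  rw [hsqrt, hsq]
  nlinarith

/-- `2 sin (θ/2)` is the length of the chord of the unit circle subtending the angle `θ`. -/
noncomputable def chordPowerSum (p x : ℝ) : ℝ :=
  2 * (2 * sin (x / 2)) ^ p + (2 * sin (3 * x / 2)) ^ p

theorem concaveOn_chordPowerSum {p : ℝ} (hp₀ : 0 ≤ p) (hp₁ : p ≤ 1) :
    ConcaveOn ℝ (Icc (π / 3) (π / 2)) (chordPowerSum p) := by
  have hhalf := concaveOn_rpow_two_mul_sin_mul (c := 1 / 2) (convex_Icc (π / 3) (π / 2))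
    (fun x hx => ⟨by linarith [hx.1, pi_pos], by linarith [hx.2, pi_pos]⟩) hp₀ hp₁
  have hthree := concaveOn_rpow_two_mul_sin_mul (c := 3 / 2) (convex_Icc (π / 3) (π / 2))
    (fun x hx => ⟨by linarith [hx.1, pi_pos], by linarith [hx.2, pi_pos]⟩) hp₀ hp₁
  refine ((hhalf.smul zero_le_two).add hthree).congr fun x _ => ?_
  simp only [chordPowerSum, Pi.add_apply, smul_eq_mul]
  ring_nf

theorem chordPowerSum_pi_div_three (p : ℝ) : chordPowerSum p (π / 3) = 2 + 2 ^ p := by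
  rw [chordPowerSum, show π / 3 / 2 = π / 6 by ring, show 3 * (π / 3) / 2 = π / 2 by ring,
    sin_pi_div_six, sin_pi_div_two]
  norm_num

theorem chordPowerSum_pi_div_two (p : ℝ) : chordPowerSum p (π / 2) = 3 * √2 ^ p := by
  rw [chordPowerSum, show π / 2 / 2 = π / 4 by ring, show 3 * (π / 2) / 2 = π - π / 4 by ring,
    sin_pi_sub, sin_pi_div_four, show 2 * (√2 / 2) = √2 by ring]
  ring

theorem stmt_13 (lam : ℝ) (hlam0 : 0 < lam) (hlam1 : lam < 1) :
    ConcaveOn ℝ (Set.Ico (Real.pi / 3) (Real.pi / 2))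
      (fun x : ℝ => 2 * (2 * Real.sin (x / 2)) ^ lam + (2 * Real.sin (3 * x / 2)) ^ lam) ∧
    ∀ x ∈ Set.Ico (Real.pi / 3) (Real.pi / 2),
      2 + (2 : ℝ) ^ lam ≤ 2 * (2 * Real.sin (x / 2)) ^ lam + (2 * Real.sin (3 * x / 2)) ^ lam ∧
      (2 * (2 * Real.sin (x / 2)) ^ lam + (2 * Real.sin (3 * x / 2)) ^ lam = 2 + (2 : ℝ) ^ lam →
        x = Real.pi / 3) := by
  have hF := concaveOn_chordPowerSum hlam0.le hlam1.le
  have hends : chordPowerSum lam (π / 3) < chordPowerSum lam (π / 2) := by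
    rw [chordPowerSum_pi_div_three, chordPowerSum_pi_div_two]
    exact two_add_two_rpow_lt_three_mul_sqrt_two_rpow hlam0 (by linarith)
  refine ⟨hF.subset Ico_subset_Icc_self (convex_Ico _ _), fun x hx => ?_⟩
  change 2 + (2 : ℝ) ^ lam ≤ chordPowerSum lam x ∧ (chordPowerSum lam x = 2 + 2 ^ lam → x = π / 3)
  rcases hx.1.eq_or_lt with rfl | hlt
  · exact ⟨(chordPowerSum_pi_div_three lam).ge, fun _ => rfl⟩
  · have hgt := hF.left_lt_of_mem_Ioc hends ⟨hlt, hx.2.le⟩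
    rw [chordPowerSum_pi_div_three] at hgt
    exact ⟨hgt.le, fun h => absurd h hgt.ne'⟩
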